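/- In the ℚ-algebra S△(2,2) at q = 1, the family {e_{E△_{1,1}+E△_{1,2}}, e_{E△_{1,2}+E△_{1,3}}, e_{2E△_{1,1}}, e_{2E△_{1,2}}} is linearly independent over B = e_λ S△(2,2) e_λ ≅ ℚ[x₁,x₂,x₂⁻¹]; in particular e_{2E△_{1,1}} and e_{2E△_{1,2}} are B-linearly independent. -/

import Mathlib

noncomputable section

/-- The row vector `row(A) = (Σ_j a_{i,j})_i` of a `ℤ×ℤ` matrix with entries in `ℕ`. -/
def rowS (A : ℤ → ℤ → ℕ) (i : ℤ) : ℕ := ∑ᶠ j, A i j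

/-- The column vector `col(A) = (Σ_i a_{i,j})_j`. -/
def colS (A : ℤ → ℤ → ℕ) (j : ℤ) : ℕ := ∑ᶠ i, A i j

/-- `Θ△(n,r)`: the set of `ℤ×ℤ` matrices over `ℕ` with `a_{i,j} = a_{i+n,j+n}`, finitely
many nonzero entries in each row and column, and total entry sum `r` over `n` consecutive
rows (equivalently columns). -/
def ThetaAff (n r : ℕ) : Set (ℤ → ℤ → ℕ) :=
  {A | (∀ i j, A (i + n) (j + n) = A i j) ∧
       (∀ i, (Function.support (A i)).Finite) ∧
       (∀ j, (Function.support fun i => A i j).Finite) ∧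
       (∑ i ∈ Finset.Icc (1 : ℤ) (n : ℤ), rowS A i) = r ∧
       (∑ j ∈ Finset.Icc (1 : ℤ) (n : ℤ), colS A j) = r}

/-- `Λ△(n,r)`: `n`-periodic sequences of natural numbers summing to `r` over a period. -/
def LambdaAff (n r : ℕ) : Set (ℤ → ℕ) :=
  {l | (∀ i, l (i + n) = l i) ∧ (∑ i ∈ Finset.Icc (1 : ℤ) (n : ℤ), l i) = r}

/-- The diagonal matrix `diag(λ)` attached to `λ ∈ Λ△(n,r)`. -/
def diagM (l : ℤ → ℕ) : ℤ → ℤ → ℕ := fun i j => if i = j then l i else 0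

/-- The `n`-periodic elementary matrix `E△_{i,j}`, with `1` at the positions
`(i + sn, j + sn)`, `s ∈ ℤ`. -/
def Edel (n : ℕ) (i j : ℤ) : ℤ → ℤ → ℕ :=
  fun x y => if x - i = y - j ∧ (n : ℤ) ∣ (x - i) then 1 else 0

/-- `Λ(∞, m)`: finitely supported sequences `t : ℤ → ℕ` with `Σ t = m`. -/
def CompInf (m : ℕ) : Set (ℤ → ℕ) :=
  {t | (Function.support t).Finite ∧ ∑ᶠ u, t u = m}

/-- `A + Σ_u t_u (E△_{h,u} - E△_{h+1,u})`. -/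
def rowAdd (n : ℕ) (h : ℤ) (t : ℤ → ℕ) (A : ℤ → ℤ → ℕ) : ℤ → ℤ → ℕ :=
  fun x y => A x y + (if (n : ℤ) ∣ (x - h) then t (y - x + h) else 0)
               - (if (n : ℤ) ∣ (x - (h + 1)) then t (y - x + (h + 1)) else 0)

/-- `A - Σ_u t_u (E△_{h,u} - E△_{h+1,u})`. -/
def rowSub (n : ℕ) (h : ℤ) (t : ℤ → ℕ) (A : ℤ → ℤ → ℕ) : ℤ → ℤ → ℕ :=
  fun x y => A x y + (if (n : ℤ) ∣ (x - (h + 1)) then t (y - x + (h + 1)) else 0)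
               - (if (n : ℤ) ∣ (x - h) then t (y - x + h) else 0)

/-- `A + Σ_u t_u (E△_{u,h+1} - E△_{u,h})`. -/
def colAdd (n : ℕ) (h : ℤ) (t : ℤ → ℕ) (A : ℤ → ℤ → ℕ) : ℤ → ℤ → ℕ :=
  fun x y => A x y + (if (n : ℤ) ∣ (y - (h + 1)) then t (x - y + (h + 1)) else 0)
               - (if (n : ℤ) ∣ (y - h) then t (x - y + h) else 0)

/-- `A - Σ_u t_u (E△_{u,h+1} - E△_{u,h})`. -/
def colSub (n : ℕ) (h : ℤ) (t : ℤ → ℕ) (A : ℤ → ℤ → ℕ) : ℤ → ℤ → ℕ :=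
  fun x y => A x y + (if (n : ℤ) ∣ (y - h) then t (x - y + h) else 0)
               - (if (n : ℤ) ∣ (y - (h + 1)) then t (x - y + (h + 1)) else 0)

/-- An algebra `S` realizing the affine Schur algebra `S△(n,r)` over `ℚ` at `q = 1`:
it has a basis `{e_A : A ∈ Θ△(n,r)}` whose structure constants vanish unless
`col(A) = row(A')`, diagonal basis elements act as partial identities, and the transpose
of matrices induces an involutory anti-automorphism `τ`. -/
structure AffineSchurAlg (n r : ℕ) (S : Type) [Ring S] [Algebra ℚ S] where
  /-- the basis elements `e_A` (extended by `0` off `Θ△(n,r)`) -/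
  e : (ℤ → ℤ → ℕ) → S
  indep : LinearIndependent ℚ (fun A : ThetaAff n r => e A.1)
  span_eq_top : Submodule.span ℚ (e '' ThetaAff n r) = ⊤
  vanish : ∀ A, A ∉ ThetaAff n r → e A = 0
  mul_disjoint : ∀ A B, A ∈ ThetaAff n r → B ∈ ThetaAff n r →
    colS A ≠ rowS B → e A * e B = 0
  diag_row : ∀ A ∈ ThetaAff n r, e (diagM (rowS A)) * e A = e A
  diag_col : ∀ A ∈ ThetaAff n r, e A * e (diagM (colS A)) = e A
  /-- the anti-involution `e_A ↦ e_{Aᵀ}` -/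
  tau : S →ₗ[ℚ] S
  tau_mul : ∀ a b : S, tau (a * b) = tau b * tau a
  tau_invol : ∀ a : S, tau (tau a) = a
  tau_e : ∀ A, tau (e A) = e (fun x y => A y x)

/-- An algebra realizing the affine Schur algebra `S△(2,2)` over `ℚ` at `q = 1`,
together with the multiplication formulas of Lusztig and of Du–Deng–Fu
(Propositions 2.5, 2.6, 2.7 of the paper, for `n = 2`), and the shift formulas
(multiplication by `e_{2E△_{1,3}}` and `e_{2E△_{3,1}}`) coming from the Hecke-algebra
description. -/
structure AffineSchur22 (S : Type) [Ring S] [Algebra ℚ S] extends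
    AffineSchurAlg 2 2 S where
  /-- Proposition 2.5(1): multiplication by `e_{B_m}`,
  `B_m = diag(λ) + m E△_{h,h+1} - m E△_{h+1,h+1}`, `λ = row(A)`. -/
  lusztig_row_plus : ∀ (h : ℤ) (m : ℕ), ∀ A ∈ ThetaAff 2 2, m ≤ rowS A (h + 1) →
    e (fun x y => diagM (rowS A) x y + m * Edel 2 h (h + 1) x y
        - m * Edel 2 (h + 1) (h + 1) x y) * e A
      = ∑ᶠ t ∈ {t | t ∈ CompInf m ∧ ∀ u, t u ≤ A (h + 1) u},
          ((∏ᶠ u, Nat.choose (A h u + t u) (t u) : ℕ) : ℚ) • e (rowAdd 2 h t A)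
  /-- Proposition 2.5(2): multiplication by `e_{C_m}`,
  `C_m = diag(λ) - m E△_{h,h} + m E△_{h+1,h}`, `λ = row(A)`. -/
  lusztig_row_minus : ∀ (h : ℤ) (m : ℕ), ∀ A ∈ ThetaAff 2 2, m ≤ rowS A h →
    e (fun x y => diagM (rowS A) x y - m * Edel 2 h h x y
        + m * Edel 2 (h + 1) h x y) * e A
      = ∑ᶠ t ∈ {t | t ∈ CompInf m ∧ ∀ u, t u ≤ A h u},
          ((∏ᶠ u, Nat.choose (A (h + 1) u + t u) (t u) : ℕ) : ℚ) • e (rowSub 2 h t A)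
  /-- Proposition 2.6(1): right multiplication by `e_{B_m}`,
  `B_m = diag(λ) + m E△_{h,h+1} - m E△_{h,h}`, `λ = col(A)`. -/
  lusztig_col_plus : ∀ (h : ℤ) (m : ℕ), ∀ A ∈ ThetaAff 2 2, m ≤ colS A h →
    e A * e (fun x y => diagM (colS A) x y + m * Edel 2 h (h + 1) x y
        - m * Edel 2 h h x y)
      = ∑ᶠ t ∈ {t | t ∈ CompInf m ∧ ∀ u, t u ≤ A u h},
          ((∏ᶠ u, Nat.choose (A u (h + 1) + t u) (t u) : ℕ) : ℚ) • e (colAdd 2 h t A)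
  /-- Proposition 2.6(2): right multiplication by `e_{C_m}`,
  `C_m = diag(λ) - m E△_{h+1,h+1} + m E△_{h+1,h}`, `λ = col(A)`. -/
  lusztig_col_minus : ∀ (h : ℤ) (m : ℕ), ∀ A ∈ ThetaAff 2 2, m ≤ colS A (h + 1) →
    e A * e (fun x y => diagM (colS A) x y - m * Edel 2 (h + 1) (h + 1) x y
        + m * Edel 2 (h + 1) h x y)
      = ∑ᶠ t ∈ {t | t ∈ CompInf m ∧ ∀ u, t u ≤ A u (h + 1)},
          ((∏ᶠ u, Nat.choose (A u h + t u) (t u) : ℕ) : ℚ) • e (colSub 2 h t A)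
  /-- Proposition 2.7: multiplication by `e_{D_m}`,
  `D_m = diag(λ) - E△_{h,h} + E△_{h,h+mn}`, `λ = row(A)`, `m ≠ 0`. -/
  lusztig_shift : ∀ (h : ℤ) (m : ℤ), m ≠ 0 → ∀ A ∈ ThetaAff 2 2, 1 ≤ rowS A h →
    e (fun x y => diagM (rowS A) x y - Edel 2 h h x y + Edel 2 h (h + 2 * m) x y) * e A
      = ∑ᶠ u ∈ {u : ℤ | 1 ≤ A h u},
          ((A h (u + 2 * m) + 1 : ℕ) : ℚ) •
            e (fun x y => A x y + Edel 2 h (u + 2 * m) x y - Edel 2 h u x y)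
  /-- multiplication by `e_{2E△_{1,3}}` shifts both column indices by `2`
  (Proposition 2.8 of the paper). -/
  x2_shift : ∀ i j : ℤ,
    e (fun x y => 2 * Edel 2 1 3 x y) * e (fun x y => Edel 2 1 i x y + Edel 2 1 j x y)
      = e (fun x y => Edel 2 1 (i + 2) x y + Edel 2 1 (j + 2) x y)
  /-- multiplication by `e_{2E△_{3,1}}` shifts both column indices by `-2`. -/
  x2inv_shift : ∀ i j : ℤ,
    e (fun x y => 2 * Edel 2 3 1 x y) * e (fun x y => Edel 2 1 i x y + Edel 2 1 j x y)
      = e (fun x y => Edel 2 1 (i - 2) x y + Edel 2 1 (j - 2) x y)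

/-- The weight `λ = (2,0) ∈ Λ△(2,2)`. -/
def lam0 : ℤ → ℕ := fun i => if (2 : ℤ) ∣ (i - 1) then 2 else 0

/-- The weight `μ = (0,2) ∈ Λ△(2,2)`. -/
def mu0 : ℤ → ℕ := fun i => if (2 : ℤ) ∣ (i - 2) then 2 else 0

/-- The weight `ν = (1,1) ∈ Λ△(2,2)`. -/
def nu0 : ℤ → ℕ := fun _ => 1

/-- The matrix `E△_{i,j} + E△_{k,l}` (for `n = 2`). -/
def Mat2 (i j k l : ℤ) : ℤ → ℤ → ℕ := fun x y => Edel 2 i j x y + Edel 2 k l x y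

end
namespace Pi1Aux
open Function

/-- indicator delta -/
def dd (v : ℤ) : ℤ → ℕ := fun u => if u = v then 1 else 0

lemma Edel_row_fin (i a r : ℤ) : (Function.support fun j => Edel 2 i a r j).Finite := by
  apply Set.Finite.subset (Set.finite_singleton (a + (r - i)))
  intro j hj
  simp only [Function.mem_support, Edel] at hj
  simp only [Set.mem_singleton_iff]
  by_contra h
  apply hj
  rw [if_neg]
  push_cast
  omega

lemma Edel_col_fin (i a c : ℤ) : (Function.support fun x => Edel 2 i a x c).Finite := by
  apply Set.Finite.subset (Set.finite_singleton (i + (c - a)))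
  intro x hx
  simp only [Function.mem_support, Edel] at hx
  simp only [Set.mem_singleton_iff]
  by_contra h
  apply hx
  rw [if_neg]
  push_cast
  omega

lemma finsum_row_Edel (i a r : ℤ) :
    (∑ᶠ j, Edel 2 i a r j) = if (2:ℤ) ∣ (r - i) then 1 else 0 := by
  by_cases h : (2:ℤ) ∣ (r - i)
  · rw [if_pos h, finsum_eq_single _ (a + (r - i))]
    · simp only [Edel]
      rw [if_pos]
      push_cast
      constructor
      · ring
      · exact_mod_cast h
    · intro x hx
      simp only [Edel]
      rw [if_neg]
      push_cast
      omega
  · rw [if_neg h, finsum_eq_zero_of_forall_eq_zero]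
    intro x
    simp only [Edel]
    rw [if_neg]
    push_cast
    omega

lemma finsum_col_Edel (i a c : ℤ) :
    (∑ᶠ x, Edel 2 i a x c) = if (2:ℤ) ∣ (c - a) then 1 else 0 := by
  by_cases h : (2:ℤ) ∣ (c - a)
  · rw [if_pos h, finsum_eq_single _ (i + (c - a))]
    · simp only [Edel]
      rw [if_pos]
      push_cast
      refine ⟨by ring, by rw [show i + (c - a) - i = c - a by ring]; exact_mod_cast h⟩
    · intro x hx
      simp only [Edel]
      rw [if_neg]
      push_cast
      omega
  · rw [if_neg h, finsum_eq_zero_of_forall_eq_zero]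
    intro x
    simp only [Edel]
    rw [if_neg]
    push_cast
    omega

lemma rowS_Mat2 (i a k b r : ℤ) :
    rowS (Mat2 i a k b) r
      = (if (2:ℤ) ∣ (r - i) then 1 else 0) + (if (2:ℤ) ∣ (r - k) then 1 else 0) := by
  unfold rowS Mat2
  rw [finsum_add_distrib (Edel_row_fin i a r) (Edel_row_fin k b r),
    finsum_row_Edel, finsum_row_Edel]

lemma colS_Mat2 (i a k b c : ℤ) :
    colS (Mat2 i a k b) c
      = (if (2:ℤ) ∣ (c - a) then 1 else 0) + (if (2:ℤ) ∣ (c - b) then 1 else 0) := by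
  unfold colS Mat2
  rw [finsum_add_distrib (Edel_col_fin i a c) (Edel_col_fin k b c),
    finsum_col_Edel, finsum_col_Edel]

lemma Icc12 : Finset.Icc (1:ℤ) ((2:ℕ):ℤ) = {1, 2} := by
  ext x
  simp only [Finset.mem_Icc, Finset.mem_insert, Finset.mem_singleton]
  push_cast
  omega

lemma Mat2_mem (i a k b : ℤ) : Mat2 i a k b ∈ ThetaAff 2 2 := by
  refine ⟨?_, ?_, ?_, ?_, ?_⟩
  · intro x y
    simp only [Mat2, Edel]
    push_cast
    split_ifs <;> omega
  · intro r
    apply Set.Finite.subset ((Edel_row_fin i a r).union (Edel_row_fin k b r))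
    intro j hj
    simp only [Function.mem_support, Mat2] at hj
    simp only [Set.mem_union, Function.mem_support]
    by_contra h
    push_neg at h
    omega
  · intro c
    apply Set.Finite.subset ((Edel_col_fin i a c).union (Edel_col_fin k b c))
    intro x hx
    simp only [Function.mem_support, Mat2] at hx
    simp only [Set.mem_union, Function.mem_support]
    by_contra h
    push_neg at h
    omega
  · rw [Icc12, Finset.sum_insert (by decide), Finset.sum_singleton, rowS_Mat2, rowS_Mat2]
    split_ifs <;> omega
  · rw [Icc12, Finset.sum_insert (by decide), Finset.sum_singleton, colS_Mat2, colS_Mat2]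
    split_ifs <;> omega

end Pi1Aux
namespace Pi1Aux
open Function

lemma dd_fin (v : ℤ) : (Function.support (dd v)).Finite := by
  apply Set.Finite.subset (Set.finite_singleton v)
  intro u hu
  simp only [Function.mem_support, dd] at hu
  simp only [Set.mem_singleton_iff]
  by_contra h
  exact hu (if_neg h)

lemma dd_sum (v : ℤ) : (∑ᶠ u, dd v u) = 1 := by
  rw [finsum_eq_single _ v]
  · simp [dd]
  · intro x hx
    simp [dd, hx]

lemma sum_eq_one {t : ℤ → ℕ} (hf : (Function.support t).Finite)
    (h1 : (∑ᶠ u, t u) = 1) : ∃ v, t = dd v := by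
  rcases Set.eq_empty_or_nonempty (Function.support t) with he | ⟨v, hv⟩
  · exfalso
    rw [finsum_eq_zero_of_forall_eq_zero (fun u => by
      by_contra h0
      exact absurd (Set.eq_empty_iff_forall_notMem.mp he u) (by simpa [Function.mem_support] using h0))] at h1
    omega
  · refine ⟨v, funext fun u => ?_⟩
    have hv1 : t v = 1 := by
      have hle := single_le_finsum v hf (fun j => Nat.zero_le (t j))
      have hge : 1 ≤ t v := Nat.one_le_iff_ne_zero.mpr hv
      omega
    by_cases hu : u = v
    · subst hu; simp [dd, hv1]
    · simp only [dd, if_neg hu]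
      by_contra h0
      have h2 : 2 ≤ ∑ᶠ u, t u := by
        rw [finsum_eq_sum t hf]
        have hsub : ({u, v} : Finset ℤ) ⊆ hf.toFinset := by
          intro x hx
          simp only [Finset.mem_insert, Finset.mem_singleton] at hx
          rcases hx with rfl | rfl
          · simp only [Set.Finite.mem_toFinset, Function.mem_support]; omega
          · simp only [Set.Finite.mem_toFinset, Function.mem_support]; omega
        calc 2 ≤ t u + t v := by omega
        _ = ∑ x ∈ ({u, v} : Finset ℤ), t x := (Finset.sum_pair hu).symm
        _ ≤ ∑ x ∈ hf.toFinset, t x := Finset.sum_le_sum_of_subset hsub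
      omega

lemma sum_eq_two {t : ℤ → ℕ} (hf : (Function.support t).Finite)
    (h2 : (∑ᶠ u, t u) = 2) : ∃ a b, t = fun u => dd a u + dd b u := by
  rcases Set.eq_empty_or_nonempty (Function.support t) with he | ⟨a, ha⟩
  · exfalso
    rw [finsum_eq_zero_of_forall_eq_zero (fun u => by
      by_contra h0
      exact absurd (Set.eq_empty_iff_forall_notMem.mp he u) (by simpa [Function.mem_support] using h0))] at h2
    omega
  · have ha1 : 1 ≤ t a := Nat.one_le_iff_ne_zero.mpr ha
    set t' : ℤ → ℕ := fun u => t u - dd a u with ht'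
    have hts : t = fun u => t' u + dd a u := by
      funext u
      simp only [ht', dd]
      split_ifs with h
      · subst h; omega
      · omega
    have hfin' : (Function.support t').Finite := by
      apply Set.Finite.subset hf
      intro u hu
      simp only [Function.mem_support, ht', dd] at hu
      simp only [Function.mem_support]
      omega
    have hsum' : (∑ᶠ u, t' u) = 1 := by
      rw [hts] at h2
      rw [finsum_add_distrib hfin' (dd_fin a), dd_sum] at h2
      omega
    obtain ⟨b, hb⟩ := sum_eq_one hfin' hsum'
    refine ⟨b, a, ?_⟩
    rw [hts, hb]

lemma theta_shift {A : ℤ → ℤ → ℕ} (hA : A ∈ ThetaAff 2 2) :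
    ∀ (k x y : ℤ), A (x + 2*k) (y + 2*k) = A x y := by
  have hp : ∀ x y : ℤ, A (x + 2) (y + 2) = A x y := by
    intro x y
    have h := hA.1 x y
    push_cast at h
    exact h
  intro k
  induction k using Int.induction_on with
  | zero => simp
  | succ k ih =>
    intro x y
    have e1 : x + 2*((k:ℤ)+1) = (x + 2*k) + 2 := by ring
    have e2 : y + 2*((k:ℤ)+1) = (y + 2*k) + 2 := by ring
    rw [e1, e2, hp, ih]
  | pred k ih =>
    intro x y
    have e1 : x + 2*(-(k:ℤ)-1) = (x + 2*(-k)) - 2 := by ring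
    have e2 : y + 2*(-(k:ℤ)-1) = (y + 2*(-k)) - 2 := by ring
    rw [e1, e2]
    have := hp (x + 2*(-(k:ℤ)) - 2) (y + 2*(-(k:ℤ)) - 2)
    simp only [sub_add_cancel] at this
    rw [← this, ih]

lemma row_all_zero {A : ℤ → ℤ → ℕ} {r : ℤ} (hfin : (Function.support (A r)).Finite)
    (h : rowS A r = 0) : ∀ j, A r j = 0 := by
  intro j
  have := single_le_finsum j hfin (fun x => Nat.zero_le (A r x))
  unfold rowS at h
  omega

lemma col_all_zero {A : ℤ → ℤ → ℕ} {c : ℤ} (hfin : (Function.support fun i => A i c).Finite)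
    (h : colS A c = 0) : ∀ i, A i c = 0 := by
  intro i
  have := single_le_finsum i hfin (fun x => Nat.zero_le (A x c))
  unfold colS at h
  omega

end Pi1Aux
namespace Pi1Aux
open Function

/-- basis matrices of the corner algebra `B` -/
def BB (p : ℤ × ℤ) : ℤ → ℤ → ℕ := Mat2 1 (2*p.1+1) 1 (2*p.2+1)

/-- basis matrices `E_{2,p} + E_{1,q}` -/
def NN (p q : ℤ) : ℤ → ℤ → ℕ := Mat2 2 p 1 q

lemma rowS_diag (ρ : ℤ → ℕ) (r : ℤ) : rowS (diagM ρ) r = ρ r := by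
  unfold rowS diagM
  rw [finsum_eq_single _ r]
  · simp
  · intro x hx
    rw [if_neg (fun h => hx h.symm)]

lemma colS_diag (ρ : ℤ → ℕ) (c : ℤ) : colS (diagM ρ) c = ρ c := by
  unfold colS diagM
  rw [finsum_eq_single _ c]
  · simp
  · intro x hx
    rw [if_neg hx]

lemma diag_lam_eq : diagM lam0 = Mat2 1 1 1 1 := by
  funext x y
  simp only [diagM, lam0, Mat2, Edel]
  push_cast
  split_ifs <;> omega

lemma diag_mu_eq : diagM mu0 = Mat2 2 2 2 2 := by
  funext x y
  simp only [diagM, mu0, Mat2, Edel]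
  push_cast
  split_ifs <;> omega

lemma diag_nu_eq : diagM nu0 = Mat2 1 1 2 2 := by
  funext x y
  simp only [diagM, nu0, Mat2, Edel]
  push_cast
  split_ifs <;> omega

lemma two_E11_eq : (fun x y => 2 * Edel 2 1 1 x y) = Mat2 1 1 1 1 := by
  funext x y
  simp only [Mat2, Edel]
  split_ifs <;> omega

lemma two_E12_eq : (fun x y => 2 * Edel 2 1 2 x y) = Mat2 1 2 1 2 := by
  funext x y
  simp only [Mat2, Edel]
  split_ifs <;> omega

lemma rowS_BB_lam (p : ℤ × ℤ) : rowS (BB p) = lam0 := by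
  funext r
  rw [BB, rowS_Mat2, lam0]
  split_ifs <;> omega

lemma colS_BB_lam (p : ℤ × ℤ) : colS (BB p) = lam0 := by
  funext c
  rw [BB, colS_Mat2, lam0]
  split_ifs <;> omega

lemma corner_classify {A : ℤ → ℤ → ℕ} (hA : A ∈ ThetaAff 2 2)
    (hrow : rowS A = lam0) (hcol : colS A = lam0) : ∃ p : ℤ × ℤ, A = BB p := by
  have hshift := theta_shift hA
  have hr2 : ∀ j, A 2 j = 0 := by
    apply row_all_zero (hA.2.1 2)
    rw [hrow]
    simp only [lam0]
    norm_num
  have hc2 : ∀ i, A i 2 = 0 := by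
    apply col_all_zero (hA.2.2.1 2)
    rw [hcol]
    simp only [lam0]
    norm_num
  have heven : ∀ x y : ℤ, (2:ℤ) ∣ x → A x y = 0 := by
    intro x y hx
    obtain ⟨k, hk⟩ : ∃ k, x = 2 + 2*k := ⟨(x-2)/2, by omega⟩
    have := hshift k 2 (y - 2*k)
    rw [show y - 2*k + 2*k = y by ring] at this
    rw [hk, this]; exact hr2 _
  have hevcol : ∀ x y : ℤ, (2:ℤ) ∣ y → A x y = 0 := by
    intro x y hy
    obtain ⟨k, hk⟩ : ∃ k, y = 2 + 2*k := ⟨(y-2)/2, by omega⟩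
    have := hshift k (x - 2*k) 2
    rw [show x - 2*k + 2*k = x by ring] at this
    rw [hk, this]; exact hc2 _
  have hrow1 : (∑ᶠ j, A 1 j) = 2 := by
    have := congrFun hrow 1
    unfold rowS at this
    rw [this]
    simp only [lam0]
    norm_num
  obtain ⟨a, b, hab⟩ := sum_eq_two (hA.2.1 1) hrow1
  have hAa : 1 ≤ A 1 a := by rw [hab]; simp [dd]
  have hAb : 1 ≤ A 1 b := by rw [hab]; simp [dd]
  have hao : ¬ (2:ℤ) ∣ a := fun h => by have := hevcol 1 a h; omega
  have hbo : ¬ (2:ℤ) ∣ b := fun h => by have := hevcol 1 b h; omega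
  obtain ⟨p1, hp1⟩ : ∃ p, a = 2*p+1 := ⟨(a-1)/2, by omega⟩
  obtain ⟨p2, hp2⟩ : ∃ p, b = 2*p+1 := ⟨(b-1)/2, by omega⟩
  refine ⟨(p1, p2), funext fun x => funext fun y => ?_⟩
  rcases Int.even_or_odd x with hx | hx
  · rw [heven x y (even_iff_two_dvd.mp hx)]
    obtain ⟨m, hm⟩ := hx
    simp only [BB, Mat2, Edel]
    rw [if_neg, if_neg]
    · push_cast; omega
    · push_cast; omega
  · obtain ⟨k, hk⟩ := hx
    have hxy : A x y = A 1 (y - x + 1) := by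
      have := hshift k 1 (y - x + 1)
      rw [← this]
      congr 1 <;> omega
    rw [hxy, hab]
    simp only [BB, Mat2, Edel, dd]
    push_cast
    split_ifs <;> omega
end Pi1Aux
namespace Pi1Aux
open Function

variable {S : Type} [Ring S] [Algebra ℚ S] (H : AffineSchur22 S)

lemma dlam_mem : diagM lam0 ∈ ThetaAff 2 2 := diag_lam_eq ▸ Mat2_mem 1 1 1 1
lemma dmu_mem : diagM mu0 ∈ ThetaAff 2 2 := diag_mu_eq ▸ Mat2_mem 2 2 2 2
lemma dnu_mem : diagM nu0 ∈ ThetaAff 2 2 := diag_nu_eq ▸ Mat2_mem 1 1 2 2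

lemma e_mul_diag_eq {A : ℤ → ℤ → ℕ} (hA : A ∈ ThetaAff 2 2) {ρ : ℤ → ℕ}
    (h : colS A = ρ) : H.e A * H.e (diagM ρ) = H.e A := by
  rw [← h]; exact H.diag_col A hA

lemma e_mul_diag_ne {A : ℤ → ℤ → ℕ} (hA : A ∈ ThetaAff 2 2) {ρ : ℤ → ℕ}
    (hd : diagM ρ ∈ ThetaAff 2 2) (h : colS A ≠ ρ) : H.e A * H.e (diagM ρ) = 0 := by
  refine H.mul_disjoint A (diagM ρ) hA hd ?_
  rw [funext (rowS_diag ρ)]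
  exact h

lemma diag_mul_e_eq {A : ℤ → ℤ → ℕ} (hA : A ∈ ThetaAff 2 2) {ρ : ℤ → ℕ}
    (h : rowS A = ρ) : H.e (diagM ρ) * H.e A = H.e A := by
  rw [← h]; exact H.diag_row A hA

lemma diag_mul_e_ne {A : ℤ → ℤ → ℕ} (hA : A ∈ ThetaAff 2 2) {ρ : ℤ → ℕ}
    (hd : diagM ρ ∈ ThetaAff 2 2) (h : rowS A ≠ ρ) : H.e (diagM ρ) * H.e A = 0 := by
  refine H.mul_disjoint (diagM ρ) A hd hA ?_
  rw [funext (colS_diag ρ)]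
  exact fun hh => h hh.symm

lemma eL_idem : H.e (diagM lam0) * H.e (diagM lam0) = H.e (diagM lam0) :=
  e_mul_diag_eq H (dlam_mem) (funext (colS_diag lam0))

lemma corner_right {f : S} (h : H.e (diagM lam0) * f * H.e (diagM lam0) = f) :
    f * H.e (diagM lam0) = f := by
  conv_lhs => rw [← h]
  rw [mul_assoc (H.e (diagM lam0) * f), eL_idem, h]

lemma corner_left {f : S} (h : H.e (diagM lam0) * f * H.e (diagM lam0) = f) :
    H.e (diagM lam0) * f = f := by
  conv_lhs => rw [← h]
  rw [← mul_assoc, ← mul_assoc, eL_idem, h]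

lemma rowS_Mat2_lam (a b : ℤ) : rowS (Mat2 1 a 1 b) = lam0 := by
  funext r
  rw [rowS_Mat2, lam0]
  split_ifs <;> omega

/-- the set of admissible `t` for a row with two entries -/
lemma tset_of_row {R : ℤ → ℕ} {c d : ℤ} (hR : ∀ u, R u = dd c u + dd d u) :
    {t : ℤ → ℕ | t ∈ CompInf 1 ∧ ∀ u, t u ≤ R u} = {dd c, dd d} := by
  ext t
  simp only [Set.mem_setOf_eq, Set.mem_insert_iff, Set.mem_singleton_iff, CompInf]
  constructor
  · rintro ⟨⟨hfin, hsum⟩, hub⟩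
    obtain ⟨v, rfl⟩ := sum_eq_one hfin hsum
    have hv := hub v
    rw [hR v] at hv
    simp only [dd] at hv
    by_cases hvc : v = c
    · left; rw [hvc]
    · by_cases hvd : v = d
      · right; rw [hvd]
      · rw [if_pos trivial, if_neg hvc, if_neg hvd] at hv
        omega
  · have hgen : ∀ v : ℤ, (v = c ∨ v = d) → ((Function.support (dd v)).Finite ∧ (∑ᶠ u, dd v u) = 1) ∧ ∀ u, dd v u ≤ R u := by
      intro v hv
      refine ⟨⟨dd_fin v, dd_sum v⟩, fun u => ?_⟩
      rw [hR u]
      simp only [dd]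
      rcases hv with rfl | rfl <;> split_ifs <;> omega
    rintro (rfl | rfl)
    · exact hgen c (Or.inl rfl)
    · exact hgen d (Or.inr rfl)

lemma dd_ne {a b : ℤ} (h : a ≠ b) : dd a ≠ dd b := by
  intro hh
  have := congrFun hh a
  simp only [dd] at this
  split_ifs at this <;> omega

lemma Mat2_comm (i a k b : ℤ) : Mat2 i a k b = Mat2 k b i a := by
  funext x y
  exact add_comm _ _

lemma Mat2_row1 (a b u : ℤ) : Mat2 1 a 1 b 1 u = dd a u + dd b u := by
  simp only [Mat2, Edel, dd]
  push_cast
  simp only [and_true]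
  split_ifs <;> omega

lemma Mat2_row2 (a b u : ℤ) : Mat2 1 a 1 b 2 u = 0 := by
  simp only [Mat2, Edel]
  rw [if_neg, if_neg] <;> (push_cast; simp)

lemma Mat2_row3 (a b u : ℤ) : Mat2 1 a 1 b (2+1) u = dd (a+2) u + dd (b+2) u := by
  simp only [Mat2, Edel, dd]
  push_cast
  simp only [and_true]
  split_ifs <;> omega

lemma coef_one (a b : ℤ) (t : ℤ → ℕ) :
    ((∏ᶠ u, (Mat2 1 a 1 b 2 u + t u).choose (t u) : ℕ) : ℚ) = 1 := by
  rw [finprod_eq_one_of_forall_eq_one (fun u => by rw [Mat2_row2, zero_add, Nat.choose_self])]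
  norm_num

lemma rowSub_dd (a b : ℤ) : rowSub 2 1 (dd a) (Mat2 1 a 1 b) = NN a b := by
  funext x y
  simp only [rowSub, Mat2, Edel, dd, NN]
  push_cast
  split_ifs <;> omega

lemma rowAdd_dd (a b : ℤ) : rowAdd 2 2 (dd (a+2)) (Mat2 1 a 1 b) = NN (a+2) b := by
  funext x y
  simp only [rowAdd, Mat2, Edel, dd, NN]
  push_cast
  split_ifs <;> omega

/-- Multiplication by `e_{E_{1,1}+E_{2,1}}` on corner basis elements. -/
lemma W1_mul (a b : ℤ) (hab : a ≠ b) :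
    H.e (Mat2 1 1 2 1) * H.e (Mat2 1 a 1 b) = H.e (NN a b) + H.e (NN b a) := by
  have key := H.lusztig_row_minus 1 1 (Mat2 1 a 1 b) (Mat2_mem 1 a 1 b)
    (by rw [rowS_Mat2_lam]; simp [lam0])
  have hmat : (fun x y => diagM (rowS (Mat2 1 a 1 b)) x y - 1 * Edel 2 1 1 x y
      + 1 * Edel 2 (1+1) 1 x y) = Mat2 1 1 2 1 := by
    funext x y
    rw [rowS_Mat2_lam]
    simp only [diagM, lam0, Mat2, Edel]
    push_cast
    split_ifs <;> omega
  rw [hmat] at key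
  simp only [show (1:ℤ)+1 = 2 by norm_num] at key
  rw [tset_of_row (Mat2_row1 a b), finsum_mem_pair (dd_ne hab), coef_one, coef_one,
    one_smul, one_smul, rowSub_dd] at key
  rw [key]
  congr 1
  rw [show Mat2 1 a 1 b = Mat2 1 b 1 a from Mat2_comm 1 a 1 b, rowSub_dd b a]

lemma W1_mul_diag (a : ℤ) :
    H.e (Mat2 1 1 2 1) * H.e (Mat2 1 a 1 a) = H.e (NN a a) := by
  have key := H.lusztig_row_minus 1 1 (Mat2 1 a 1 a) (Mat2_mem 1 a 1 a)
    (by rw [rowS_Mat2_lam]; simp [lam0])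
  have hmat : (fun x y => diagM (rowS (Mat2 1 a 1 a)) x y - 1 * Edel 2 1 1 x y
      + 1 * Edel 2 (1+1) 1 x y) = Mat2 1 1 2 1 := by
    funext x y
    rw [rowS_Mat2_lam]
    simp only [diagM, lam0, Mat2, Edel]
    push_cast
    split_ifs <;> omega
  rw [hmat] at key
  simp only [show (1:ℤ)+1 = 2 by norm_num] at key
  rw [tset_of_row (Mat2_row1 a a), Set.pair_eq_singleton, finsum_mem_singleton,
    coef_one, one_smul, rowSub_dd] at key
  rw [key]

/-- Multiplication by `e_{E_{1,1}+E_{2,3}}` on corner basis elements. -/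
lemma W0_mul (a b : ℤ) (hab : a ≠ b) :
    H.e (Mat2 1 1 2 3) * H.e (Mat2 1 a 1 b) = H.e (NN (a+2) b) + H.e (NN (b+2) a) := by
  have key := H.lusztig_row_plus 2 1 (Mat2 1 a 1 b) (Mat2_mem 1 a 1 b)
    (by rw [rowS_Mat2_lam]; simp [lam0])
  have hmat : (fun x y => diagM (rowS (Mat2 1 a 1 b)) x y + 1 * Edel 2 2 (2+1) x y
      - 1 * Edel 2 (2+1) (2+1) x y) = Mat2 1 1 2 3 := by
    funext x y
    rw [rowS_Mat2_lam]
    simp only [diagM, lam0, Mat2, Edel]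
    push_cast
    split_ifs <;> omega
  rw [hmat, tset_of_row (Mat2_row3 a b), finsum_mem_pair (dd_ne (by omega : a + 2 ≠ b + 2)),
    coef_one, coef_one, one_smul, one_smul, rowAdd_dd] at key
  rw [key]
  congr 1
  rw [show Mat2 1 a 1 b = Mat2 1 b 1 a from Mat2_comm 1 a 1 b, rowAdd_dd b a]

lemma W0_mul_diag (a : ℤ) :
    H.e (Mat2 1 1 2 3) * H.e (Mat2 1 a 1 a) = H.e (NN (a+2) a) := by
  have key := H.lusztig_row_plus 2 1 (Mat2 1 a 1 a) (Mat2_mem 1 a 1 a)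
    (by rw [rowS_Mat2_lam]; simp [lam0])
  have hmat : (fun x y => diagM (rowS (Mat2 1 a 1 a)) x y + 1 * Edel 2 2 (2+1) x y
      - 1 * Edel 2 (2+1) (2+1) x y) = Mat2 1 1 2 3 := by
    funext x y
    rw [rowS_Mat2_lam]
    simp only [diagM, lam0, Mat2, Edel]
    push_cast
    split_ifs <;> omega
  rw [hmat, tset_of_row (Mat2_row3 a a), Set.pair_eq_singleton, finsum_mem_singleton,
    coef_one, one_smul, rowAdd_dd] at key
  rw [key]

end Pi1Aux
namespace Pi1Aux
open Function

def dd2 : ℤ → ℕ := fun u => if u = 1 then 2 else 0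

variable {S : Type} [Ring S] [Algebra ℚ S] (H : AffineSchur22 S)

lemma Mat2_1212_col1 (u : ℤ) : Mat2 1 2 1 2 u 1 = 0 := by
  simp only [Mat2, Edel]
  rw [if_neg] <;> (push_cast; omega)

lemma Mat2_1212_col2 (u : ℤ) : Mat2 1 2 1 2 u (1+1) = dd2 u := by
  simp only [Mat2, Edel, dd2]
  push_cast
  split_ifs <;> omega

lemma dd2_fin : (Function.support dd2).Finite := by
  apply Set.Finite.subset (Set.finite_singleton 1)
  intro u hu
  simp only [Function.mem_support, dd2] at hu
  simp only [Set.mem_singleton_iff]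
  by_contra hh
  exact hu (if_neg hh)

lemma dd2_sum : (∑ᶠ u, dd2 u) = 2 := by
  rw [finsum_eq_single _ 1]
  · simp [dd2]
  · intro x hx; simp [dd2, hx]

lemma v4_killer : ∀ f3 : S, H.e (diagM lam0) * f3 * H.e (diagM lam0) = f3 →
    f3 * H.e (Mat2 1 2 1 2) = 0 → f3 = 0 := by
  intro f3 hc h0
  have hle : 2 ≤ colS (Mat2 1 2 1 2) (1+1) := by
    rw [colS_Mat2]
    norm_num
  have key := H.lusztig_col_minus 1 2 (Mat2 1 2 1 2) (Mat2_mem 1 2 1 2) hle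
  have hset : {t : ℤ → ℕ | t ∈ CompInf 2 ∧ ∀ u, t u ≤ Mat2 1 2 1 2 u (1+1)}
      = {dd2} := by
    ext t
    simp only [Set.mem_setOf_eq, Set.mem_singleton_iff, CompInf]
    constructor
    · rintro ⟨⟨hfin, hsum⟩, hub⟩
      have hz : ∀ u, u ≠ 1 → t u = 0 := by
        intro u hu
        have := hub u
        rw [Mat2_1212_col2] at this
        simp only [dd2, if_neg hu] at this
        omega
      have h1 : t 1 = 2 := by rw [← finsum_eq_single t 1 hz]; exact hsum
      funext u
      by_cases hu : u = 1
      · subst hu; simp [dd2, h1]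
      · simp [dd2, hu, hz u hu]
    · rintro rfl
      exact ⟨⟨dd2_fin, dd2_sum⟩, fun u => by rw [Mat2_1212_col2]⟩
  rw [hset, finsum_mem_singleton] at key
  have hco : (∏ᶠ u, (Mat2 1 2 1 2 u 1 + dd2 u).choose (dd2 u)) = 1 :=
    finprod_eq_one_of_forall_eq_one fun u => by
      rw [Mat2_1212_col1, zero_add, Nat.choose_self]
  rw [hco, Nat.cast_one, one_smul] at key
  have hsub : colSub 2 1 dd2 (Mat2 1 2 1 2) = diagM lam0 := by
    funext x y
    simp only [colSub, Mat2, Edel, dd2, diagM, lam0]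
    push_cast
    split_ifs <;> omega
  rw [hsub] at key
  calc f3 = f3 * H.e (diagM lam0) := (corner_right H hc).symm
  _ = f3 * (H.e (Mat2 1 2 1 2) * H.e (fun x y => diagM (colS (Mat2 1 2 1 2)) x y
        - 2 * Edel 2 (1+1) (1+1) x y + 2 * Edel 2 (1+1) 1 x y)) := by rw [key]
  _ = (f3 * H.e (Mat2 1 2 1 2)) * H.e (fun x y => diagM (colS (Mat2 1 2 1 2)) x y
        - 2 * Edel 2 (1+1) (1+1) x y + 2 * Edel 2 (1+1) 1 x y) := by rw [mul_assoc]
  _ = 0 := by rw [h0, zero_mul]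

lemma NN_mem (p q : ℤ) : NN p q ∈ ThetaAff 2 2 := Mat2_mem 2 p 1 q

def Wemb : ℤ × ℤ → ThetaAff 2 2 := fun r => ⟨NN (2*r.1+1) (2*r.2+1), NN_mem _ _⟩

lemma Wemb_inj : Function.Injective Wemb := by
  intro r r' h
  have hm : NN (2*r.1+1) (2*r.2+1) = NN (2*r'.1+1) (2*r'.2+1) := congrArg Subtype.val h
  have e2 : r.2 = r'.2 := by
    have h1 := congrFun (congrFun hm 1) (2*r'.2+1)
    simp only [NN, Mat2, Edel] at h1
    push_cast at h1
    simp only [and_true] at h1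
    split_ifs at h1 <;> omega
  have e1 : r.1 = r'.1 := by
    have h2 := congrFun (congrFun hm 2) (2*r'.1+1)
    simp only [NN, Mat2, Edel] at h2
    push_cast at h2
    simp only [and_true] at h2
    split_ifs at h2 <;> omega
  exact Prod.ext_iff.mpr ⟨e1, e2⟩

lemma W_indep : LinearIndependent ℚ (fun r : ℤ × ℤ => H.e (NN (2*r.1+1) (2*r.2+1))) :=
  H.indep.comp Wemb Wemb_inj

lemma corner_mem_span {f : S} (hf : H.e (diagM lam0) * f * H.e (diagM lam0) = f) :
    f ∈ Submodule.span ℚ (Set.range fun p : ℤ × ℤ => H.e (BB p)) := by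
  set P : S →ₗ[ℚ] S :=
    (LinearMap.mulLeft ℚ (H.e (diagM lam0))).comp (LinearMap.mulRight ℚ (H.e (diagM lam0)))
    with hP
  have hPf : P f = f := by
    simp only [hP, LinearMap.comp_apply, LinearMap.mulLeft_apply, LinearMap.mulRight_apply]
    rw [← mul_assoc]
    exact hf
  have hftop : f ∈ Submodule.span ℚ (H.e '' ThetaAff 2 2) := by
    rw [H.span_eq_top]
    trivial
  have hmem := Submodule.apply_mem_span_image_of_mem_span P hftop
  rw [hPf] at hmem
  refine Submodule.span_le.mpr ?_ hmem
  rintro x ⟨y, ⟨A, hA, rfl⟩, rfl⟩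
  show P (H.e A) ∈ _
  simp only [hP, LinearMap.comp_apply, LinearMap.mulLeft_apply, LinearMap.mulRight_apply]
  by_cases hcol : colS A = lam0
  · rw [e_mul_diag_eq H hA hcol]
    by_cases hrow : rowS A = lam0
    · rw [diag_mul_e_eq H hA hrow]
      obtain ⟨p, rfl⟩ := corner_classify hA hrow hcol
      exact Submodule.subset_span ⟨p, rfl⟩
    · rw [diag_mul_e_ne H hA dlam_mem hrow]
      exact zero_mem _
  · rw [e_mul_diag_ne H hA dlam_mem hcol, mul_zero]
    exact zero_mem _

lemma XXinv {h : S} (hmem : h ∈ Submodule.span ℚ (Set.range fun p : ℤ × ℤ => H.e (BB p))) :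
    H.e (fun x y => 2 * Edel 2 1 3 x y) * (H.e (fun x y => 2 * Edel 2 3 1 x y) * h) = h := by
  induction hmem using Submodule.span_induction with
  | mem x hx =>
    obtain ⟨p, rfl⟩ := hx
    show H.e (fun x y => 2 * Edel 2 1 3 x y) * (H.e (fun x y => 2 * Edel 2 3 1 x y) * H.e (BB p)) = H.e (BB p)
    have hBB : BB p = (fun x y => Edel 2 1 (2*p.1+1) x y + Edel 2 1 (2*p.2+1) x y) := rfl
    rw [hBB, H.x2inv_shift (2*p.1+1) (2*p.2+1), H.x2_shift (2*p.1+1-2) (2*p.2+1-2)]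
    congr 1
    funext x y
    rw [show (2*p.1+1-2+2 : ℤ) = 2*p.1+1 by ring, show (2*p.2+1-2+2 : ℤ) = 2*p.2+1 by ring]
  | zero => simp
  | add x y hx hy ihx ihy => rw [mul_add, mul_add, ihx, ihy]
  | smul a x hx ih => rw [mul_smul_comm, mul_smul_comm, ih]

end Pi1Aux
namespace Pi1Aux
open Function

/-- symmetrized coefficient -/
def Phi (c : ℤ × ℤ →₀ ℚ) (r : ℤ × ℤ) : ℚ := c r + if r.1 = r.2 then 0 else c (r.2, r.1)

variable {M : Type} [AddCommGroup M] [Module ℚ M]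

lemma Phi_symm (c : ℤ × ℤ →₀ ℚ) (x y : ℤ) : Phi c (x, y) = Phi c (y, x) := by
  simp only [Phi]
  by_cases h : x = y
  · subst h; simp
  · rw [if_neg h, if_neg (Ne.symm h)]
    ring

lemma reshape (W : ℤ × ℤ → M) (c : ℤ × ℤ →₀ ℚ) (F : ℤ × ℤ → M) (s : ℤ)
    (hdiag : ∀ p : ℤ × ℤ, p.1 = p.2 → F p = W (p.1 + s, p.2))
    (hoff : ∀ p : ℤ × ℤ, p.1 ≠ p.2 → F p = W (p.1 + s, p.2) + W (p.2 + s, p.1)) :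
    (c.sum fun p α => α • F p)
      = ∑ r ∈ c.support.image (fun p => (p.1 + s, p.2))
            ∪ c.support.image (fun p => (p.2 + s, p.1)),
          Phi c (r.1 - s, r.2) • W r := by
  classical
  rw [Finsupp.sum]
  have hsplit : ∀ p ∈ c.support,
      c p • F p = c p • W (p.1 + s, p.2) + (if p.1 = p.2 then 0 else c p) • W (p.2 + s, p.1) := by
    intro p _
    by_cases hp : p.1 = p.2
    · rw [hdiag p hp, if_pos hp, zero_smul, add_zero]
    · rw [hoff p hp, if_neg hp, smul_add]
  rw [Finset.sum_congr rfl hsplit, Finset.sum_add_distrib]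
  have h1 : ∑ p ∈ c.support, c p • W (p.1 + s, p.2)
      = ∑ r ∈ c.support.image (fun p => (p.1 + s, p.2)), c (r.1 - s, r.2) • W r := by
    refine Finset.sum_nbij' (fun p => (p.1 + s, p.2)) (fun r => (r.1 - s, r.2)) ?_ ?_ ?_ ?_ ?_
    · intro p hp; exact Finset.mem_image_of_mem _ hp
    · rintro r hr
      obtain ⟨p, hp, rfl⟩ := Finset.mem_image.mp hr
      obtain ⟨x, y⟩ := p
      show ((x + s - s, y) : ℤ × ℤ) ∈ c.support
      rw [show ((x + s - s, y) : ℤ × ℤ) = (x, y) by rw [Prod.mk.injEq]; exact ⟨by ring, rfl⟩]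
      exact hp
    · intro p _
      obtain ⟨x, y⟩ := p
      show ((x + s - s, y) : ℤ × ℤ) = (x, y)
      rw [Prod.mk.injEq]; exact ⟨by ring, rfl⟩
    · intro r _
      obtain ⟨x, y⟩ := r
      show ((x - s + s, y) : ℤ × ℤ) = (x, y)
      rw [Prod.mk.injEq]; exact ⟨by ring, rfl⟩
    · intro p _
      obtain ⟨x, y⟩ := p
      show c (x, y) • W (x + s, y) = c (x + s - s, y) • W (x + s, y)
      rw [show ((x + s - s, y) : ℤ × ℤ) = (x, y) by rw [Prod.mk.injEq]; exact ⟨by ring, rfl⟩]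
  have h2 : ∑ p ∈ c.support, (if p.1 = p.2 then 0 else c p) • W (p.2 + s, p.1)
      = ∑ r ∈ c.support.image (fun p => (p.2 + s, p.1)),
          (if r.1 - s = r.2 then 0 else c (r.2, r.1 - s)) • W r := by
    refine Finset.sum_nbij' (fun p => (p.2 + s, p.1)) (fun r => (r.2, r.1 - s)) ?_ ?_ ?_ ?_ ?_
    · intro p hp; exact Finset.mem_image_of_mem _ hp
    · rintro r hr
      obtain ⟨p, hp, rfl⟩ := Finset.mem_image.mp hr
      obtain ⟨x, y⟩ := p
      show ((x, y + s - s) : ℤ × ℤ) ∈ c.support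
      rw [show ((x, y + s - s) : ℤ × ℤ) = (x, y) by rw [Prod.mk.injEq]; exact ⟨rfl, by ring⟩]
      exact hp
    · intro p _
      obtain ⟨x, y⟩ := p
      show ((x, y + s - s) : ℤ × ℤ) = (x, y)
      rw [Prod.mk.injEq]; exact ⟨rfl, by ring⟩
    · intro r _
      obtain ⟨x, y⟩ := r
      show ((x - s + s, y) : ℤ × ℤ) = (x, y)
      rw [Prod.mk.injEq]; exact ⟨by ring, rfl⟩
    · intro p _
      obtain ⟨x, y⟩ := p
      show (if x = y then 0 else c (x, y)) • W (y + s, x)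
        = (if y + s - s = x then 0 else c (x, y + s - s)) • W (y + s, x)
      rw [show y + s - s = y by ring]
      by_cases h : x = y
      · rw [if_pos h, if_pos h.symm]
      · rw [if_neg h, if_neg (Ne.symm h)]
  rw [h1, h2]
  have hext1 : ∑ r ∈ c.support.image (fun p => (p.1 + s, p.2)), c (r.1 - s, r.2) • W r
      = ∑ r ∈ c.support.image (fun p : ℤ × ℤ => (p.1 + s, p.2))
            ∪ c.support.image (fun p => (p.2 + s, p.1)), c (r.1 - s, r.2) • W r := by
    apply Finset.sum_subset Finset.subset_union_left
    intro r _ hr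
    obtain ⟨x, y⟩ := r
    have hc0 : c (x - s, y) = 0 := by
      by_contra hc
      apply hr
      apply Finset.mem_image.mpr
      refine ⟨(x - s, y), Finsupp.mem_support_iff.mpr hc, ?_⟩
      show ((x - s + s, y) : ℤ × ℤ) = (x, y)
      rw [Prod.mk.injEq]; exact ⟨by ring, rfl⟩
    show c (x - s, y) • W (x, y) = 0
    rw [hc0, zero_smul]
  have hext2 : ∑ r ∈ c.support.image (fun p : ℤ × ℤ => (p.2 + s, p.1)),
        (if r.1 - s = r.2 then 0 else c (r.2, r.1 - s)) • W r
      = ∑ r ∈ c.support.image (fun p : ℤ × ℤ => (p.1 + s, p.2))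
            ∪ c.support.image (fun p => (p.2 + s, p.1)),
          (if r.1 - s = r.2 then 0 else c (r.2, r.1 - s)) • W r := by
    apply Finset.sum_subset Finset.subset_union_right
    intro r _ hr
    obtain ⟨x, y⟩ := r
    show (if x - s = y then 0 else c (y, x - s)) • W (x, y) = 0
    by_cases hd : x - s = y
    · rw [if_pos hd, zero_smul]
    · rw [if_neg hd]
      have hc0 : c (y, x - s) = 0 := by
        by_contra hc
        apply hr
        apply Finset.mem_image.mpr
        refine ⟨(y, x - s), Finsupp.mem_support_iff.mpr hc, ?_⟩
        show ((x - s + s, y) : ℤ × ℤ) = (x, y)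
        rw [Prod.mk.injEq]; exact ⟨by ring, rfl⟩
      rw [hc0, zero_smul]
  rw [hext1, hext2, ← Finset.sum_add_distrib]
  apply Finset.sum_congr rfl
  intro r _
  rw [← add_smul]
  rfl

lemma Phi_supp {c : ℤ × ℤ →₀ ℚ} {r : ℤ × ℤ} (h : Phi c r ≠ 0) :
    r ∈ c.support ∪ c.support.image Prod.swap := by
  simp only [Phi] at h
  by_cases h1 : c r = 0
  · rw [h1, zero_add] at h
    simp only [Finset.mem_union, Finset.mem_image]
    right
    split_ifs at h with hd
    · exact absurd rfl h
    · refine ⟨(r.2, r.1), Finsupp.mem_support_iff.mpr h, ?_⟩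
      obtain ⟨x, y⟩ := r
      rfl
  · exact Finset.mem_union_left _ (Finsupp.mem_support_iff.mpr h1)

lemma descent_zero (d : ℤ × ℤ →₀ ℚ)
    (hstep : ∀ x y : ℤ, Phi d (x, y) = Phi d (x + 1, y - 1)) :
    ∀ r, Phi d r = 0 := by
  intro r
  obtain ⟨x, y⟩ := r
  by_contra h0
  have hk : ∀ k : ℕ, Phi d (x + k, y - k) ≠ 0 := by
    intro k
    induction k with
    | zero => simpa using h0
    | succ n ih =>
      have hs := hstep (x + n) (y - n)
      push_cast
      rw [show ((x + ((n:ℤ)+1)), (y - ((n:ℤ)+1))) = (x + (n:ℤ) + 1, y - (n:ℤ) - 1) by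
        rw [Prod.mk.injEq]; exact ⟨by ring, by ring⟩, ← hs]
      exact ih
  have finj : Function.Injective (fun k : ℕ => ((x + k, y - k) : ℤ × ℤ)) := by
    intro k k' hkk
    simp only [Prod.mk.injEq] at hkk
    omega
  have hsub : Set.range (fun k : ℕ => ((x + k, y - k) : ℤ × ℤ))
      ⊆ ↑(d.support ∪ d.support.image Prod.swap) := by
    rintro _ ⟨k, rfl⟩
    exact Phi_supp (hk k)
  exact Set.infinite_range_of_injective finj (Set.Finite.subset (Finset.finite_toSet _) hsub)

lemma sum_zero_of_Phi (V : ℤ × ℤ → M) (hV : ∀ p : ℤ × ℤ, V (p.2, p.1) = V p)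
    (c : ℤ × ℤ →₀ ℚ) (hc : ∀ r, Phi c r = 0) : (c.sum fun p α => α • V p) = 0 := by
  classical
  have key : (c.sum fun p α => α • V p) + (c.sum fun p α => α • V p) = 0 := by
    rw [Finsupp.sum]
    have h2 : ∑ p ∈ c.support, c p • V p
        = ∑ r ∈ c.support.image Prod.swap, c (r.2, r.1) • V r := by
      refine Finset.sum_nbij' Prod.swap Prod.swap ?_ ?_ ?_ ?_ ?_
      · intro p hp; exact Finset.mem_image_of_mem _ hp
      · rintro r hr
        obtain ⟨p, hp, rfl⟩ := Finset.mem_image.mp hr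
        simpa [Prod.swap_swap] using hp
      · intro p _; exact Prod.swap_swap p
      · intro r _; exact Prod.swap_swap r
      · intro p _
        obtain ⟨x, y⟩ := p
        show c (x, y) • V (x, y) = c (x, y) • V (y, x)
        rw [show V (y, x) = V (x, y) from hV (x, y)]
    nth_rewrite 2 [h2]
    have hext1 : ∑ p ∈ c.support, c p • V p
        = ∑ p ∈ c.support ∪ c.support.image Prod.swap, c p • V p := by
      apply Finset.sum_subset Finset.subset_union_left
      intro r _ hr
      rw [Finsupp.notMem_support_iff.mp hr, zero_smul]
    have hext2 : ∑ r ∈ c.support.image Prod.swap, c (r.2, r.1) • V r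
        = ∑ r ∈ c.support ∪ c.support.image Prod.swap, c (r.2, r.1) • V r := by
      apply Finset.sum_subset Finset.subset_union_right
      intro r _ hr
      have hc0 : c (r.2, r.1) = 0 := by
        by_contra hcc
        apply hr
        apply Finset.mem_image.mpr
        refine ⟨(r.2, r.1), Finsupp.mem_support_iff.mpr hcc, ?_⟩
        obtain ⟨x, y⟩ := r
        rfl
      rw [hc0, zero_smul]
    rw [hext1, hext2, ← Finset.sum_add_distrib]
    apply Finset.sum_eq_zero
    intro r _
    rw [← add_smul]
    have hzero : c r + c (r.2, r.1) = 0 := by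
      have := hc r
      simp only [Phi] at this
      split_ifs at this with hd
      · have hrr : ((r.2, r.1) : ℤ × ℤ) = r := by
          obtain ⟨x, y⟩ := r
          simp only [Prod.mk.injEq]
          exact ⟨hd.symm, hd⟩
        rw [hrr]
        rw [add_zero] at this
        rw [this, add_zero]
      · exact this
    rw [hzero, zero_smul]
  have h2s : (2:ℚ) • (c.sum fun p α => α • V p) = 0 := by
    rw [two_smul]
    exact key
  exact (smul_eq_zero.mp h2s).resolve_left two_ne_zero

end Pi1Aux
namespace Pi1Aux
open Function

lemma Phi_mem_R {c : ℤ × ℤ →₀ ℚ} {s : ℤ} {r : ℤ × ℤ} (h : Phi c (r.1 - s, r.2) ≠ 0) :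
    r ∈ c.support.image (fun p : ℤ × ℤ => (p.1 + s, p.2))
      ∪ c.support.image (fun p => (p.2 + s, p.1)) := by
  rcases Finset.mem_union.mp (Phi_supp h) with hm | hm
  · apply Finset.mem_union_left
    apply Finset.mem_image.mpr
    refine ⟨(r.1 - s, r.2), hm, ?_⟩
    obtain ⟨x, y⟩ := r
    show ((x - s + s, y) : ℤ × ℤ) = (x, y)
    rw [Prod.mk.injEq]
    exact ⟨by ring, rfl⟩
  · apply Finset.mem_union_right
    obtain ⟨q, hq, hqe⟩ := Finset.mem_image.mp hm
    apply Finset.mem_image.mpr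
    refine ⟨q, hq, ?_⟩
    obtain ⟨qa, qb⟩ := q
    obtain ⟨x, y⟩ := r
    simp only [Prod.swap_prod_mk, Prod.mk.injEq] at hqe
    show ((qb + s, qa) : ℤ × ℤ) = (x, y)
    rw [Prod.mk.injEq]
    exact ⟨by omega, by omega⟩

end Pi1Aux

open Pi1Aux in

/-- from Lemma 4.4 of the paper. In `S△(2,2)` over `ℚ` at `q = 1`,
the family `{e_{E△_{1,1}+E△_{1,2}}, e_{E△_{1,2}+E△_{1,3}}, e_{2E△_{1,1}},
e_{2E△_{1,2}}}` is linearly independent over the corner algebra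
`B = e_λ S△(2,2) e_λ`; in particular `e_{2E△_{1,1}}` and `e_{2E△_{1,2}}` are
`B`-linearly independent: any relation `f e_{2E△_{1,1}} + g e_{2E△_{1,2}} = 0` with
`f, g ∈ B` forces `f = 0` and `g = 0`. -/
theorem pi1_linearly_independent_over_corner (S : Type) [Ring S] [Algebra ℚ S]
    (H : AffineSchur22 S) :
    (∀ f : Fin 4 → S, (∀ i, H.e (diagM lam0) * f i * H.e (diagM lam0) = f i) →
      (∑ i, f i * ![H.e (Mat2 1 1 1 2), H.e (Mat2 1 2 1 3),
          H.e (fun x y => 2 * Edel 2 1 1 x y),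
          H.e (fun x y => 2 * Edel 2 1 2 x y)] i) = 0 →
      ∀ i, f i = 0) ∧
    (∀ f g : S, H.e (diagM lam0) * f * H.e (diagM lam0) = f →
      H.e (diagM lam0) * g * H.e (diagM lam0) = g →
      f * H.e (fun x y => 2 * Edel 2 1 1 x y) + g * H.e (fun x y => 2 * Edel 2 1 2 x y)
        = 0 →
      f = 0 ∧ g = 0) := by
  classical
  have main : (∀ f : Fin 4 → S, (∀ i, H.e (diagM lam0) * f i * H.e (diagM lam0) = f i) →
      (∑ i, f i * ![H.e (Mat2 1 1 1 2), H.e (Mat2 1 2 1 3),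
          H.e (fun x y => 2 * Edel 2 1 1 x y),
          H.e (fun x y => 2 * Edel 2 1 2 x y)] i) = 0 →
      ∀ i, f i = 0) := by
    intro f hcorner hrel
    rw [Fin.sum_univ_four] at hrel
    simp only [Matrix.cons_val_zero, Matrix.cons_val_one, Matrix.head_cons,
      Matrix.cons_val_two, Matrix.tail_cons, Matrix.cons_val_three] at hrel
    rw [two_E11_eq, two_E12_eq] at hrel
    -- column computations
    have hcol1 : colS (Mat2 1 1 1 2) = nu0 := by
      funext j; rw [colS_Mat2]; simp only [nu0]; split_ifs <;> omega
    have hcol2 : colS (Mat2 1 2 1 3) = nu0 := by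
      funext j; rw [colS_Mat2]; simp only [nu0]; split_ifs <;> omega
    have hcol3 : colS (Mat2 1 1 1 1) = lam0 := by
      funext j; rw [colS_Mat2]; simp only [lam0]; split_ifs <;> omega
    have hcol4 : colS (Mat2 1 2 1 2) = mu0 := by
      funext j; rw [colS_Mat2]; simp only [mu0]; split_ifs <;> omega
    have hlam_ne_nu : lam0 ≠ nu0 := by
      intro hh; have := congrFun hh 2; simp only [lam0, nu0] at this; norm_num at this
    have hmu_ne_nu : mu0 ≠ nu0 := by
      intro hh; have := congrFun hh 1; simp only [lam0, mu0, nu0] at this; norm_num at this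
    have hnu_ne_lam : nu0 ≠ lam0 := fun hh => hlam_ne_nu hh.symm
    have hmu_ne_lam : mu0 ≠ lam0 := by
      intro hh; have := congrFun hh 1; simp only [lam0, mu0] at this; norm_num at this
    have hnu_ne_mu : nu0 ≠ mu0 := fun hh => hmu_ne_nu hh.symm
    have hlam_ne_mu : lam0 ≠ mu0 := fun hh => hmu_ne_lam hh.symm
    -- projection with nu0
    have hp1 : f 0 * H.e (Mat2 1 1 1 2) + f 1 * H.e (Mat2 1 2 1 3) = 0 := by
      have hmul := congrArg (fun z => z * H.e (diagM nu0)) hrel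
      simp only [add_mul, zero_mul, mul_assoc] at hmul
      rw [e_mul_diag_eq H (Mat2_mem 1 1 1 2) hcol1,
          e_mul_diag_eq H (Mat2_mem 1 2 1 3) hcol2,
          e_mul_diag_ne H (Mat2_mem 1 1 1 1) dnu_mem (by rw [hcol3]; exact hlam_ne_nu),
          e_mul_diag_ne H (Mat2_mem 1 2 1 2) dnu_mem (by rw [hcol4]; exact hmu_ne_nu),
          mul_zero, mul_zero, add_zero, add_zero] at hmul
      exact hmul
    -- projection with lam0 : f 2 = 0
    have hp3 : f 2 * H.e (Mat2 1 1 1 1) = 0 := by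
      have hmul := congrArg (fun z => z * H.e (diagM lam0)) hrel
      simp only [add_mul, zero_mul, mul_assoc] at hmul
      rw [e_mul_diag_eq H (Mat2_mem 1 1 1 1) hcol3,
          e_mul_diag_ne H (Mat2_mem 1 1 1 2) dlam_mem (by rw [hcol1]; exact hnu_ne_lam),
          e_mul_diag_ne H (Mat2_mem 1 2 1 3) dlam_mem (by rw [hcol2]; exact hnu_ne_lam),
          e_mul_diag_ne H (Mat2_mem 1 2 1 2) dlam_mem (by rw [hcol4]; exact hmu_ne_lam),
          mul_zero, mul_zero, mul_zero, add_zero, zero_add, zero_add] at hmul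
      exact hmul
    have hf2 : f 2 = 0 := by
      have hre : f 2 * H.e (diagM lam0) = f 2 := corner_right H (hcorner 2)
      rw [diag_lam_eq] at hre
      rw [← hre, hp3]
    -- projection with mu0 : f 3 * v4 = 0
    have hp4 : f 3 * H.e (Mat2 1 2 1 2) = 0 := by
      have hmul := congrArg (fun z => z * H.e (diagM mu0)) hrel
      simp only [add_mul, zero_mul, mul_assoc] at hmul
      rw [e_mul_diag_eq H (Mat2_mem 1 2 1 2) hcol4,
          e_mul_diag_ne H (Mat2_mem 1 1 1 2) dmu_mem (by rw [hcol1]; exact hnu_ne_mu),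
          e_mul_diag_ne H (Mat2_mem 1 2 1 3) dmu_mem (by rw [hcol2]; exact hnu_ne_mu),
          e_mul_diag_ne H (Mat2_mem 1 1 1 1) dmu_mem (by rw [hcol3]; exact hlam_ne_mu),
          mul_zero, mul_zero, mul_zero, add_zero, zero_add, zero_add] at hmul
      exact hmul
    have hf3 : f 3 = 0 := v4_killer H (f 3) (hcorner 3) hp4
    -- the core : f 0 and f 1
    have htau_lam : H.tau (H.e (diagM lam0)) = H.e (diagM lam0) := by
      rw [H.tau_e]
      congr 1
      funext x y
      simp only [diagM, lam0]
      split_ifs <;> omega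
    have hcg : H.e (diagM lam0) * H.tau (f 0) * H.e (diagM lam0) = H.tau (f 0) := by
      have hthis := congrArg H.tau (hcorner 0)
      rw [H.tau_mul, H.tau_mul, htau_lam, ← mul_assoc] at hthis
      exact hthis
    have hch : H.e (diagM lam0) * H.tau (f 1) * H.e (diagM lam0) = H.tau (f 1) := by
      have hthis := congrArg H.tau (hcorner 1)
      rw [H.tau_mul, H.tau_mul, htau_lam, ← mul_assoc] at hthis
      exact hthis
    -- split v2 through the shift operator
    have hv2split : H.e (Mat2 1 2 1 3)
        = H.e (fun x y => 2 * Edel 2 1 3 x y) * H.e (Mat2 1 0 1 1) := by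
      have hx := H.x2_shift 0 1
      have h01 : (fun x y : ℤ => Edel 2 1 0 x y + Edel 2 1 1 x y) = Mat2 1 0 1 1 := rfl
      have h23 : (fun x y : ℤ => Edel 2 1 (0+2) x y + Edel 2 1 (1+2) x y) = Mat2 1 2 1 3 := by
        funext x y
        rw [show (0:ℤ)+2 = 2 by norm_num, show (1:ℤ)+2 = 3 by norm_num]
        rfl
      rw [h01, h23] at hx
      exact hx.symm
    rw [hv2split, ← mul_assoc] at hp1
    have htau_rel := congrArg H.tau hp1
    rw [map_add, map_zero, H.tau_mul, H.tau_mul, H.tau_mul, H.tau_e, H.tau_e, H.tau_e]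
      at htau_rel
    have ht1 : (fun x y => Mat2 1 1 1 2 y x) = Mat2 1 1 2 1 := by
      funext x y; simp only [Mat2, Edel]; push_cast; split_ifs <;> omega
    have ht2 : (fun x y => Mat2 1 0 1 1 y x) = Mat2 1 1 2 3 := by
      funext x y; simp only [Mat2, Edel]; push_cast; split_ifs <;> omega
    have ht3 : (fun x y => (fun x y => 2 * Edel 2 1 3 x y) y x)
        = (fun x y => 2 * Edel 2 3 1 x y) := by
      funext x y; simp only [Edel]; push_cast; split_ifs <;> omega
    rw [ht1, ht2, ht3] at htau_rel
    -- htau_rel : W1 * tau (f 0) + W0 * (X'' * tau (f 1)) = 0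
    have hX''mat : (fun x y => 2 * Edel 2 3 1 x y) = Mat2 3 1 3 1 := by
      funext x y; simp only [Mat2, Edel]; split_ifs <;> omega
    have hX''row : rowS (Mat2 3 1 3 1) = lam0 := by
      funext r; rw [rowS_Mat2]; simp only [lam0]; split_ifs <;> omega
    have hch' : H.e (diagM lam0) * (H.e (fun x y => 2 * Edel 2 3 1 x y) * H.tau (f 1))
        * H.e (diagM lam0) = H.e (fun x y => 2 * Edel 2 3 1 x y) * H.tau (f 1) := by
      rw [hX''mat, ← mul_assoc, diag_mul_e_eq H (Mat2_mem 3 1 3 1) hX''row, mul_assoc,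
        corner_right H hch]
    obtain ⟨c, hcs⟩ := Finsupp.mem_span_range_iff_exists_finsupp.mp (corner_mem_span H hcg)
    obtain ⟨d, hds⟩ := Finsupp.mem_span_range_iff_exists_finsupp.mp (corner_mem_span H hch')
    rw [← hcs, ← hds] at htau_rel
    have hW1sum : H.e (Mat2 1 1 2 1) * (c.sum fun p α => α • H.e (BB p))
        = c.sum fun p α => α • (H.e (Mat2 1 1 2 1) * H.e (BB p)) := by
      rw [Finsupp.sum, Finsupp.sum, Finset.mul_sum]
      exact Finset.sum_congr rfl fun p _ => mul_smul_comm _ _ _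
    have hW0sum : H.e (Mat2 1 1 2 3) * (d.sum fun p α => α • H.e (BB p))
        = d.sum fun p α => α • (H.e (Mat2 1 1 2 3) * H.e (BB p)) := by
      rw [Finsupp.sum, Finsupp.sum, Finset.mul_sum]
      exact Finset.sum_congr rfl fun p _ => mul_smul_comm _ _ _
    rw [hW1sum, hW0sum] at htau_rel
    have e1 : (c.sum fun p α => α • (H.e (Mat2 1 1 2 1) * H.e (BB p)))
        = ∑ r ∈ c.support.image (fun p : ℤ × ℤ => (p.1 + (0:ℤ), p.2))
              ∪ c.support.image (fun p => (p.2 + (0:ℤ), p.1)),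
            Phi c (r.1 - 0, r.2) • H.e (NN (2*r.1+1) (2*r.2+1)) := by
      refine reshape (fun r : ℤ × ℤ => H.e (NN (2*r.1+1) (2*r.2+1))) c
        (fun p => H.e (Mat2 1 1 2 1) * H.e (BB p)) 0 ?_ ?_
      · intro p hp
        obtain ⟨x, y⟩ := p
        simp only at hp
        subst hp
        show H.e (Mat2 1 1 2 1) * H.e (BB (x, x)) = H.e (NN (2*(x+0)+1) (2*x+1))
        rw [show (2*(x+0)+1 : ℤ) = 2*x+1 by ring]
        exact W1_mul_diag H (2*x+1)
      · intro p hp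
        obtain ⟨x, y⟩ := p
        simp only at hp
        show H.e (Mat2 1 1 2 1) * H.e (BB (x, y))
          = H.e (NN (2*(x+0)+1) (2*y+1)) + H.e (NN (2*(y+0)+1) (2*x+1))
        rw [show (2*(x+0)+1 : ℤ) = 2*x+1 by ring, show (2*(y+0)+1 : ℤ) = 2*y+1 by ring]
        exact W1_mul H (2*x+1) (2*y+1) (by omega)
    have e2 : (d.sum fun p α => α • (H.e (Mat2 1 1 2 3) * H.e (BB p)))
        = ∑ r ∈ d.support.image (fun p : ℤ × ℤ => (p.1 + (1:ℤ), p.2))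
              ∪ d.support.image (fun p => (p.2 + (1:ℤ), p.1)),
            Phi d (r.1 - 1, r.2) • H.e (NN (2*r.1+1) (2*r.2+1)) := by
      refine reshape (fun r : ℤ × ℤ => H.e (NN (2*r.1+1) (2*r.2+1))) d
        (fun p => H.e (Mat2 1 1 2 3) * H.e (BB p)) 1 ?_ ?_
      · intro p hp
        obtain ⟨x, y⟩ := p
        simp only at hp
        subst hp
        show H.e (Mat2 1 1 2 3) * H.e (BB (x, x)) = H.e (NN (2*(x+1)+1) (2*x+1))
        rw [show (2*(x+1)+1 : ℤ) = (2*x+1)+2 by ring]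
        exact W0_mul_diag H (2*x+1)
      · intro p hp
        obtain ⟨x, y⟩ := p
        simp only at hp
        show H.e (Mat2 1 1 2 3) * H.e (BB (x, y))
          = H.e (NN (2*(x+1)+1) (2*y+1)) + H.e (NN (2*(y+1)+1) (2*x+1))
        rw [show (2*(x+1)+1 : ℤ) = (2*x+1)+2 by ring, show (2*(y+1)+1 : ℤ) = (2*y+1)+2 by ring]
        exact W0_mul H (2*x+1) (2*y+1) (by omega)
    rw [e1, e2] at htau_rel
    -- extend both sums to the union
    set R1 := c.support.image (fun p : ℤ × ℤ => (p.1 + (0:ℤ), p.2))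
        ∪ c.support.image (fun p => (p.2 + (0:ℤ), p.1)) with hR1
    set R2 := d.support.image (fun p : ℤ × ℤ => (p.1 + (1:ℤ), p.2))
        ∪ d.support.image (fun p => (p.2 + (1:ℤ), p.1)) with hR2
    have hext1 : ∑ r ∈ R1, Phi c (r.1 - 0, r.2) • H.e (NN (2*r.1+1) (2*r.2+1))
        = ∑ r ∈ R1 ∪ R2, Phi c (r.1 - 0, r.2) • H.e (NN (2*r.1+1) (2*r.2+1)) := by
      apply Finset.sum_subset Finset.subset_union_left
      intro r _ hr
      by_cases hz : Phi c (r.1 - 0, r.2) = 0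
      · rw [hz, zero_smul]
      · exact absurd (hR1 ▸ Phi_mem_R hz) hr
    have hext2 : ∑ r ∈ R2, Phi d (r.1 - 1, r.2) • H.e (NN (2*r.1+1) (2*r.2+1))
        = ∑ r ∈ R1 ∪ R2, Phi d (r.1 - 1, r.2) • H.e (NN (2*r.1+1) (2*r.2+1)) := by
      apply Finset.sum_subset Finset.subset_union_right
      intro r _ hr
      by_cases hz : Phi d (r.1 - 1, r.2) = 0
      · rw [hz, zero_smul]
      · exact absurd (hR2 ▸ Phi_mem_R hz) hr
    rw [hext1, hext2, ← Finset.sum_add_distrib] at htau_rel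
    have htau_rel' : ∑ r ∈ R1 ∪ R2,
        (Phi c (r.1 - 0, r.2) + Phi d (r.1 - 1, r.2)) • H.e (NN (2*r.1+1) (2*r.2+1)) = 0 := by
      rw [← htau_rel]
      exact Finset.sum_congr rfl fun r _ => (add_smul _ _ _)
    have hind := linearIndependent_iff'.mp (W_indep H) (R1 ∪ R2)
      (fun r => Phi c (r.1 - 0, r.2) + Phi d (r.1 - 1, r.2)) htau_rel'
    have hall : ∀ r : ℤ × ℤ, Phi c (r.1 - 0, r.2) + Phi d (r.1 - 1, r.2) = 0 := by
      intro r
      by_cases hr : r ∈ R1 ∪ R2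
      · exact hind r hr
      · by_cases h1 : Phi c (r.1 - 0, r.2) = 0
        · by_cases h2 : Phi d (r.1 - 1, r.2) = 0
          · rw [h1, h2, add_zero]
          · exact absurd (Finset.mem_union_right _ (hR2 ▸ Phi_mem_R h2))
              (fun hm => hr (by exact hm))
        · exact absurd (Finset.mem_union_left _ (hR1 ▸ Phi_mem_R h1))
            (fun hm => hr (by exact hm))
    have hcd : ∀ x y : ℤ, Phi c (x, y) + Phi d (x - 1, y) = 0 := by
      intro x y
      have := hall (x, y)
      rw [show ((x, y).1 - 0 : ℤ) = x by norm_num] at this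
      exact this
    have hstep : ∀ x y : ℤ, Phi d (x, y) = Phi d (x + 1, y - 1) := by
      intro x y
      have h1 := hcd (x + 1) y
      rw [show (x + 1 - 1 : ℤ) = x by ring] at h1
      have h2 := hcd y (x + 1)
      rw [Phi_symm c (x+1) y] at h1
      have h3 : Phi d (x, y) = Phi d (y - 1, x + 1) := by
        have : Phi d (x, y) = - Phi c (y, x + 1) := by linarith
        rw [this]
        linarith
      rw [h3, Phi_symm d (y-1) (x+1)]
    have hPhid : ∀ r, Phi d r = 0 := descent_zero d hstep
    have hPhic : ∀ r, Phi c r = 0 := by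
      intro r
      obtain ⟨x, y⟩ := r
      have h1 := hcd x y
      rw [hPhid (x - 1, y)] at h1
      linarith
    have hVsym : ∀ p : ℤ × ℤ, H.e (BB (p.2, p.1)) = H.e (BB p) := by
      intro p
      exact congrArg H.e (Mat2_comm 1 (2*p.2+1) 1 (2*p.1+1))
    have hg0 : H.tau (f 0) = 0 := by
      rw [← hcs]
      exact sum_zero_of_Phi (fun p => H.e (BB p)) hVsym c hPhic
    have hh'0 : H.e (fun x y => 2 * Edel 2 3 1 x y) * H.tau (f 1) = 0 := by
      rw [← hds]
      exact sum_zero_of_Phi (fun p => H.e (BB p)) hVsym d hPhid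
    have hXh := XXinv H (corner_mem_span H hch)
    rw [hh'0, mul_zero] at hXh
    have hf1 : f 1 = 0 := by
      have hti := H.tau_invol (f 1)
      rw [← hXh, map_zero] at hti
      exact hti.symm
    have hf0 : f 0 = 0 := by
      have hti := H.tau_invol (f 0)
      rw [hg0, map_zero] at hti
      exact hti.symm
    intro i
    fin_cases i
    · exact hf0
    · exact hf1
    · exact hf2
    · exact hf3
  refine ⟨main, ?_⟩
  intro f g hf hg hrel
  have h0corner : ∀ i, H.e (diagM lam0) * (![0, 0, f, g] i) * H.e (diagM lam0)
      = ![0, 0, f, g] i := by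
    intro i
    fin_cases i
    · simp
    · simp
    · exact hf
    · exact hg
  have hsum : (∑ i, ![0, 0, f, g] i * ![H.e (Mat2 1 1 1 2), H.e (Mat2 1 2 1 3),
      H.e (fun x y => 2 * Edel 2 1 1 x y),
      H.e (fun x y => 2 * Edel 2 1 2 x y)] i) = 0 := by
    rw [Fin.sum_univ_four]
    simp only [Matrix.cons_val_zero, Matrix.cons_val_one, Matrix.head_cons,
      Matrix.cons_val_two, Matrix.tail_cons, Matrix.cons_val_three]
    rw [zero_mul, zero_mul, zero_add, zero_add]
    exact hrel
  have hz := main ![0, 0, f, g] h0corner hsum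
  exact ⟨by simpa using hz 2, by simpa using hz 3⟩
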